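/- arXiv:2603.06519 — 3 statements merged into one kernel-verified Lean document; each statement's English description precedes it below -/
import Mathlib

section
/- Let α, D̃ be real constants, K : ℝ → ℝ continuously differentiable, I ⊆ ℝ an open interval, and ψ : ℝ → ℝ continuously differentiable on I satisfying K(ψ(ξ))·ψ'(ξ) = D̃·exp( -α ξ²/4 ) for all ξ ∈ I. Then u(x,t) := ψ(x/√t) satisfies the nonlinear heat–diffusion equation C(u)u_t = (K(u)u_x)_x with C = αK at every point (x,t) with t > 0 and x/√t ∈ I. (Invariant solution associated with the generator X̄₂ = (x/2)∂_x + t∂_t in Case 2.) -/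
/-- The nonlinear heat–diffusion equation `C(u)·u_t = (K(u)·u_x)_x` holds at the point `p`. -/
def heatEqAt (C K : ℝ → ℝ) (u : ℝ × ℝ → ℝ) (p : ℝ × ℝ) : Prop :=
  C (u p) * deriv (fun s => u (p.1, s)) p.2 =
    deriv (fun y => K (u (y, p.2)) * deriv (fun z => u (z, p.2)) y) p.1

/-!
Along `ξ = x/√t`, a profile `u(x,t) = ψ(x/√t)` has `u_t = -ξ ψ'(ξ)/(2t)` and flux
`K(u)u_x = F(ξ)/√t`, where `F = K(ψ)ψ'`; hence the PDE reduces to the ODE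
`-(ξ/2) C(ψ)ψ' = F'`. In Case 2 the flux is the Gaussian `F(ξ) = D̃ e^{-αξ²/4}`, for which
`F' = -(αξ/2) F = -(ξ/2) αK(ψ)ψ'`.
-/

open Filter Topology

theorem HasDerivAt.comp_div_const {ψ : ℝ → ℝ} {d y : ℝ} (s : ℝ) (h : HasDerivAt ψ d (y / s)) :
    HasDerivAt (fun z => ψ (z / s)) (d / s) y := by
  have h' : HasDerivAt (fun z : ℝ => z / s) (1 / s) y := (hasDerivAt_id y).div_const s
  exact (h.comp y h').congr_deriv (by ring)

theorem hasDerivAt_div_sqrt (x : ℝ) {t : ℝ} (ht : 0 < t) :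
    HasDerivAt (fun τ => x / √τ) (-(x / √t) / (2 * t)) t := by
  have hs : √t ≠ 0 := (Real.sqrt_pos.2 ht).ne'
  have h := (hasDerivAt_const t x).div (Real.hasDerivAt_sqrt ht.ne') hs
  refine h.congr_deriv ?_
  rw [Real.sq_sqrt ht.le]
  field_simp
  ring

theorem hasDerivAt_gaussian (D α ξ : ℝ) :
    HasDerivAt (fun ξ => D * Real.exp (-α * ξ ^ 2 / 4))
      (-α * ξ / 2 * (D * Real.exp (-α * ξ ^ 2 / 4))) ξ :=
  ((((hasDerivAt_pow 2 ξ).const_mul (-α)).div_const 4).exp.const_mul D).congr_deriv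
    (by norm_num; ring)

theorem heatEqAt_of_selfSimilar {C K ψ F : ℝ → ℝ} {U : Set ℝ} {F' x t : ℝ} (hU : IsOpen U)
    (ht : 0 < t) (hx : x / √t ∈ U) (hψ : DifferentiableOn ℝ ψ U)
    (hflux : ∀ ξ ∈ U, K (ψ ξ) * deriv ψ ξ = F ξ) (hF : HasDerivAt F F' (x / √t))
    (hode : -(x / √t) / 2 * C (ψ (x / √t)) * deriv ψ (x / √t) = F') :
    heatEqAt C K (fun p => ψ (p.1 / √p.2)) (x, t) := by
  set s := √t
  have hs : s ^ 2 = t := Real.sq_sqrt ht.le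
  have hψ' : ∀ ξ ∈ U, HasDerivAt ψ (deriv ψ ξ) ξ := fun ξ hξ =>
    (hψ.differentiableAt (hU.mem_nhds hξ)).hasDerivAt
  have hut : HasDerivAt (fun τ => ψ (x / √τ)) (deriv ψ (x / s) * (-(x / s) / (2 * t))) t :=
    (hψ' _ hx).comp t (hasDerivAt_div_sqrt x ht)
  have hflux_near : (fun y => K (ψ (y / s)) * deriv (fun z => ψ (z / s)) y)
      =ᶠ[𝓝 x] fun y => F (y / s) / s := by
    have hUs : IsOpen ((· / s) ⁻¹' U) := hU.preimage (continuous_id.div_const s)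
    filter_upwards [hUs.mem_nhds hx] with y hy
    rw [((hψ' (y / s) hy).comp_div_const s).deriv, mul_div_assoc', hflux (y / s) hy]
  show C (ψ (x / s)) * deriv (fun τ => ψ (x / √τ)) t = _
  rw [hut.deriv, hflux_near.deriv_eq, ((hF.comp_div_const s).div_const s).deriv, ← hode,
    div_div, ← sq, hs]
  field_simp

theorem stmt11_general (α Dt : ℝ) (K : ℝ → ℝ)
    (a b : ℝ) (ψ : ℝ → ℝ) (hψ : ContDiffOn ℝ 1 ψ (Set.Ioo a b))
    (hrel : ∀ ξ ∈ Set.Ioo a b,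
      K (ψ ξ) * deriv ψ ξ = Dt * Real.exp (-α * ξ ^ 2 / 4)) :
    ∀ x t : ℝ, 0 < t → x / Real.sqrt t ∈ Set.Ioo a b →
      heatEqAt (fun y => α * K y) K (fun p => ψ (p.1 / Real.sqrt p.2)) (x, t) := by
  intro x t ht hx
  refine heatEqAt_of_selfSimilar isOpen_Ioo ht hx (hψ.differentiableOn one_ne_zero) hrel
    (hasDerivAt_gaussian Dt α _) ?_
  rw [mul_assoc, mul_assoc, hrel _ hx]
  ring

/-- Invariant solution associated with the generator `X̄₂ = (x/2)∂_x + t∂_t` in Case 2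
(`C = αK`): if `K(ψ)ψ' = D̃·exp(-αξ²/4)` on an open interval, then `u(x,t) = ψ(x/√t)`
solves `αK(u)u_t = (K(u)u_x)_x` for `t > 0`, `x/√t` in the interval. -/
theorem stmt11 (α Dt : ℝ) (K : ℝ → ℝ) (hK : ContDiff ℝ 1 K)
    (a b : ℝ) (ψ : ℝ → ℝ) (hψ : ContDiffOn ℝ 1 ψ (Set.Ioo a b))
    (hrel : ∀ ξ ∈ Set.Ioo a b,
      K (ψ ξ) * deriv ψ ξ = Dt * Real.exp (-α * ξ ^ 2 / 4)) :
    ∀ x t : ℝ, 0 < t → x / Real.sqrt t ∈ Set.Ioo a b →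
      heatEqAt (fun y => α * K y) K (fun p => ψ (p.1 / Real.sqrt p.2)) (x, t) :=
  stmt11_general α Dt K a b ψ hψ hrel
end

section
/- Let α, ε be real constants, K : ℝ → ℝ continuously differentiable, and F an antiderivative of K (F' = K). Let Ω ⊆ ℝ² be open and u : ℝ × ℝ → ℝ twice continuously differentiable on Ω satisfying the nonlinear heat–diffusion equation C(u)u_t = (K(u)u_x)_x with C = αK on Ω. Let v : ℝ × ℝ → ℝ be twice continuously differentiable on Ω' := {(x,t) : 1+εt > 0 and (x/(1+εt), t/(1+εt)) ∈ Ω} and satisfy F(v(x,t)) = (1+εt)^{-1/2}·exp( -αεx²/(4(1+εt)) )·F(u( x/(1+εt), t/(1+εt) )) on Ω'. Then v satisfies C(v)v_t = (K(v)v_x)_x at every point of Ω'. (Invariance under the one-parameter projective group S̄₁ generated by X̄₁.) -/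
open Filter Topology

section Slices

variable {X Y : Type*} [TopologicalSpace X] [TopologicalSpace Y] {p : X × Y} {P : X × Y → Prop}

theorem Filter.Eventually.slice_fst (h : ∀ᶠ q in 𝓝 p, P q) : ∀ᶠ x in 𝓝 p.1, P (x, p.2) :=
  (tendsto_id.prodMk_nhds tendsto_const_nhds).eventually h

theorem Filter.Eventually.slice_snd (h : ∀ᶠ q in 𝓝 p, P q) : ∀ᶠ y in 𝓝 p.2, P (p.1, y) :=
  (tendsto_const_nhds.prodMk_nhds tendsto_id).eventually h

end Slices

theorem contDiff_succ_of_hasDerivAt {𝕜 E : Type*} [NontriviallyNormedField 𝕜] [NormedAddCommGroup E]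
    [NormedSpace 𝕜 E] {F K : 𝕜 → E} {n : ℕ} (hF : ∀ y, HasDerivAt F (K y) y)
    (hK : ContDiff 𝕜 n K) : ContDiff 𝕜 (n + 1) F :=
  contDiff_succ_iff_deriv.2
    ⟨fun y => (hF y).differentiableAt, by simp, by rwa [funext fun y => (hF y).deriv]⟩

theorem DifferentiableAt.hasDerivAt_comp_prodMk {w : ℝ × ℝ → ℝ} {γ₁ γ₂ : ℝ → ℝ} {a b r : ℝ}
    (hw : DifferentiableAt ℝ w (γ₁ r, γ₂ r)) (h₁ : HasDerivAt γ₁ a r) (h₂ : HasDerivAt γ₂ b r) :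
    HasDerivAt (fun τ => w (γ₁ τ, γ₂ τ))
      (a * deriv (fun x => w (x, γ₂ r)) (γ₁ r) + b * deriv (fun y => w (γ₁ r, y)) (γ₂ r)) r := by
  have hx : deriv (fun x => w (x, γ₂ r)) (γ₁ r) = fderiv ℝ w (γ₁ r, γ₂ r) (1, 0) :=
    (hw.hasFDerivAt.comp_hasDerivAt (γ₁ r) ((hasDerivAt_id _).prodMk (hasDerivAt_const _ _))).deriv
  have hy : deriv (fun y => w (γ₁ r, y)) (γ₂ r) = fderiv ℝ w (γ₁ r, γ₂ r) (0, 1) :=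
    (hw.hasFDerivAt.comp_hasDerivAt (γ₂ r) ((hasDerivAt_const _ _).prodMk (hasDerivAt_id _))).deriv
  have hab : ((a, b) : ℝ × ℝ) = a • (1, 0) + b • (0, 1) := by simp
  have := hw.hasFDerivAt.comp_hasDerivAt r (h₁.prodMk h₂)
  rwa [hab, map_add, map_smul, map_smul, ← hx, ← hy] at this

theorem hasDerivAt_deriv_mul_comp_div {G G' f f' : ℝ → ℝ} {G'' f'' x s : ℝ} (hs : s ≠ 0)
    (hG : ∀ᶠ y in 𝓝 x, HasDerivAt G (G' y) y) (hG' : HasDerivAt G' G'' x)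
    (hf : ∀ᶠ y in 𝓝 (x / s), HasDerivAt f (f' y) y) (hf' : HasDerivAt f' f'' (x / s)) :
    HasDerivAt (deriv fun z => G z * f (z / s))
      (G'' * f (x / s) + 2 * G' x * f' (x / s) / s + G x * f'' / s ^ 2) x := by
  have hdiv : ∀ y, HasDerivAt (fun z => z / s) (1 / s) y := fun y => (hasDerivAt_id y).div_const s
  have hf_near : ∀ᶠ y in 𝓝 x, HasDerivAt f (f' (y / s)) (y / s) :=
    ((continuous_id.div_const s).tendsto x).eventually hf
  have hderiv : deriv (fun z => G z * f (z / s)) =ᶠ[𝓝 x]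
      fun y => G' y * f (y / s) + G y * (f' (y / s) * (1 / s)) := by
    filter_upwards [hG, hf_near] with y hGy hfy
    exact (hGy.mul (hfy.comp y (hdiv y))).deriv
  refine HasDerivAt.congr_of_eventuallyEq (HasDerivAt.congr_deriv
    ((hG'.mul ((hf.self_of_nhds).comp x (hdiv x))).add
      ((hG.self_of_nhds).mul ((hf'.comp x (hdiv x)).mul_const (1 / s)))) ?_) hderiv
  simp only [Function.comp_apply]
  field_simp
  ring

theorem heatEqAt_congr {C K : ℝ → ℝ} {u v : ℝ × ℝ → ℝ} {p : ℝ × ℝ} (h : u =ᶠ[𝓝 p] v) :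
    heatEqAt C K u p ↔ heatEqAt C K v p := by
  have hslice : (fun z => u (z, p.2)) =ᶠ[𝓝 p.1] fun z => v (z, p.2) := h.slice_fst
  have hx : (fun y => K (u (y, p.2)) * deriv (fun z => u (z, p.2)) y) =ᶠ[𝓝 p.1]
      fun y => K (v (y, p.2)) * deriv (fun z => v (z, p.2)) y := by
    filter_upwards [eventually_eventuallyEq_nhds.2 hslice] with y hy
    rw [hy.deriv_eq, show u (y, p.2) = v (y, p.2) from hy.eq_of_nhds]
  have ht : (fun s => u (p.1, s)) =ᶠ[𝓝 p.2] fun s => v (p.1, s) := h.slice_snd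
  unfold heatEqAt
  rw [h.eq_of_nhds, hx.deriv_eq, ht.deriv_eq]

theorem heatEqAt_iff_comp {α : ℝ} {K F : ℝ → ℝ} (hF : ∀ y, HasDerivAt F (K y) y)
    {u : ℝ × ℝ → ℝ} {p : ℝ × ℝ} (hu : ∀ᶠ q in 𝓝 p, DifferentiableAt ℝ u q) :
    heatEqAt (fun y => α * K y) K u p ↔
      heatEqAt (fun _ => α) (fun _ => 1) (fun q => F (u q)) p := by
  have ht : deriv (fun s => F (u (p.1, s))) p.2 = K (u p) * deriv (fun s => u (p.1, s)) p.2 :=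
    ((hF _).comp p.2 (hu.self_of_nhds.comp p.2
      ((differentiableAt_const _).prodMk differentiableAt_id)).hasDerivAt).deriv
  have hx : (fun y => K (u (y, p.2)) * deriv (fun z => u (z, p.2)) y) =ᶠ[𝓝 p.1]
      fun y => 1 * deriv (fun z => F (u (z, p.2))) y := by
    filter_upwards [hu.slice_fst] with y hy
    rw [one_mul]
    exact ((hF _).comp y (hy.comp y
      (by fun_prop : DifferentiableAt ℝ (fun z : ℝ => (z, p.2)) y)).hasDerivAt).deriv.symm
  unfold heatEqAt
  rw [ht, hx.deriv_eq, mul_assoc]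

theorem isOpen_appellDomain {ε : ℝ} {Ω : Set (ℝ × ℝ)} (hΩ : IsOpen Ω) :
    IsOpen {p : ℝ × ℝ | 0 < 1 + ε * p.2 ∧ (p.1 / (1 + ε * p.2), p.2 / (1 + ε * p.2)) ∈ Ω} := by
  have hφ : ContinuousOn (fun p : ℝ × ℝ => (p.1 / (1 + ε * p.2), p.2 / (1 + ε * p.2)))
      {p | 0 < 1 + ε * p.2} := by
    refine ContinuousOn.prodMk ?_ ?_ <;>
      exact ContinuousOn.div (by fun_prop) (by fun_prop) fun p hp => hp.ne'
  exact hφ.isOpen_inter_preimage (isOpen_lt continuous_const (by fun_prop)) hΩ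

noncomputable def appellFactor (α ε x t : ℝ) : ℝ :=
  (1 + ε * t) ^ (-(1 / 2) : ℝ) * Real.exp (-α * ε * x ^ 2 / (4 * (1 + ε * t)))

noncomputable def appellTransform (α ε : ℝ) (w : ℝ × ℝ → ℝ) (p : ℝ × ℝ) : ℝ :=
  appellFactor α ε p.1 p.2 * w (p.1 / (1 + ε * p.2), p.2 / (1 + ε * p.2))

section AppellFactor

variable {α ε : ℝ}

theorem hasDerivAt_appellFactor_fst (x t : ℝ) :
    HasDerivAt (fun y => appellFactor α ε y t)
      (appellFactor α ε x t * (-(α * ε * x) / (2 * (1 + ε * t)))) x := by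
  have := (((hasDerivAt_pow 2 x).const_mul (-α * ε)).div_const (4 * (1 + ε * t))).exp.const_mul
    ((1 + ε * t) ^ (-(1 / 2) : ℝ))
  refine this.congr_deriv ?_
  simp only [appellFactor]
  generalize 1 + ε * t = s
  push_cast
  ring

theorem hasDerivAt_appellFactor_fst_mul (x t : ℝ) :
    HasDerivAt (fun y => appellFactor α ε y t * (-(α * ε * y) / (2 * (1 + ε * t))))
      (appellFactor α ε x t * ((α * ε * x / (2 * (1 + ε * t))) ^ 2 - α * ε / (2 * (1 + ε * t))))
      x := by
  refine ((hasDerivAt_appellFactor_fst x t).mul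
    (((hasDerivAt_id x).const_mul (α * ε)).neg.div_const (2 * (1 + ε * t)))).congr_deriv ?_
  simp only [Pi.neg_apply, id]
  generalize 1 + ε * t = s
  ring

theorem hasDerivAt_appellFactor_snd {x t : ℝ} (hs : 1 + ε * t ≠ 0) :
    HasDerivAt (fun τ => appellFactor α ε x τ)
      (appellFactor α ε x t * (α * ε ^ 2 * x ^ 2 / (4 * (1 + ε * t) ^ 2) - ε / (2 * (1 + ε * t))))
      t := by
  have hlin : HasDerivAt (fun τ : ℝ => 1 + ε * τ) ε t := by
    simpa using ((hasDerivAt_id t).const_mul ε).const_add 1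
  have := ((Real.hasDerivAt_rpow_const (p := -(1 / 2)) (Or.inl hs)).comp t hlin).mul
    ((hasDerivAt_const t (-α * ε * x ^ 2)).div (hlin.const_mul 4) (mul_ne_zero four_ne_zero hs)).exp
  refine this.congr_deriv ?_
  simp only [appellFactor, Function.comp_apply, Pi.div_apply, Real.rpow_sub_one hs]
  field_simp
  ring

end AppellFactor

theorem heatEqAt_appellTransform {α ε x t : ℝ} {w : ℝ × ℝ → ℝ} (hs : 1 + ε * t ≠ 0)
    (hw : ContDiffAt ℝ 2 w (x / (1 + ε * t), t / (1 + ε * t)))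
    (h : heatEqAt (fun _ => α) (fun _ => 1) w (x / (1 + ε * t), t / (1 + ε * t))) :
    heatEqAt (fun _ => α) (fun _ => 1) (appellTransform α ε w) (x, t) := by
  set f := fun z => w (z, t / (1 + ε * t))
  have hf : ContDiffAt ℝ 2 f (x / (1 + ε * t)) := hw.comp (x / (1 + ε * t))
    (by fun_prop : ContDiffAt ℝ 2 (fun z : ℝ => (z, t / (1 + ε * t))) _)
  have hf₁ : ∀ᶠ y in 𝓝 (x / (1 + ε * t)), HasDerivAt f (deriv f y) y :=
    (hf.eventually (by simp)).mono fun y hy => (hy.differentiableAt (by norm_num)).hasDerivAt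
  have hf₂ : HasDerivAt (deriv f) (deriv (deriv f) (x / (1 + ε * t))) (x / (1 + ε * t)) :=
    ((hf.derivWithin (m := 1) (by norm_num)).differentiableAt one_ne_zero).hasDerivAt
  have hWxx := hasDerivAt_deriv_mul_comp_div hs
    (Eventually.of_forall (hasDerivAt_appellFactor_fst (α := α) (ε := ε) · t))
    (hasDerivAt_appellFactor_fst_mul x t) hf₁ hf₂
  have hlin : HasDerivAt (fun τ : ℝ => 1 + ε * τ) ε t := by
    simpa using ((hasDerivAt_id t).const_mul ε).const_add 1
  have hWt : HasDerivAt (fun τ => appellFactor α ε x τ * w (x / (1 + ε * τ), τ / (1 + ε * τ)))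
      _ t := (hasDerivAt_appellFactor_snd (α := α) (x := x) hs).mul
    (DifferentiableAt.hasDerivAt_comp_prodMk (γ₁ := fun τ => x / (1 + ε * τ))
      (γ₂ := fun τ => τ / (1 + ε * τ)) (hw.differentiableAt (by norm_num))
      ((hasDerivAt_const t x).div hlin hs) ((hasDerivAt_id t).div hlin hs))
  have hpde : deriv (deriv f) (x / (1 + ε * t)) =
      α * deriv (fun τ => w (x / (1 + ε * t), τ)) (t / (1 + ε * t)) := by
    unfold heatEqAt at h
    simpa only [one_mul] using h.symm
  unfold heatEqAt
  simp only [one_mul]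
  change α * deriv (fun τ => appellFactor α ε x τ * w (x / (1 + ε * τ), τ / (1 + ε * τ))) t =
    deriv (deriv fun z => appellFactor α ε z t * f (z / (1 + ε * t))) x
  rw [hWt.deriv, hWxx.deriv, hpde]
  simp only [f, id]
  field_simp
  ring

/-- Invariance under the projective group `S̄₁` generated by `X̄₁` in Case 2 (`C = αK`):
if `u` solves the equation and
`F(v(x,t)) = (1+εt)^{-1/2}·exp(-αεx²/(4(1+εt)))·F(u(x/(1+εt), t/(1+εt)))`
(where `F' = K`), then `v` also solves it on the transformed domain. -/
theorem stmt13 (α ε : ℝ) (K : ℝ → ℝ) (hK : ContDiff ℝ 1 K)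
    (F : ℝ → ℝ) (hF : ∀ y : ℝ, HasDerivAt F (K y) y)
    (Ω : Set (ℝ × ℝ)) (hΩ : IsOpen Ω)
    (u : ℝ × ℝ → ℝ) (hu : ContDiffOn ℝ 2 u Ω)
    (hpde : ∀ p ∈ Ω, heatEqAt (fun y => α * K y) K u p)
    (v : ℝ × ℝ → ℝ)
    (hv : ContDiffOn ℝ 2 v {p : ℝ × ℝ |
      0 < 1 + ε * p.2 ∧ (p.1 / (1 + ε * p.2), p.2 / (1 + ε * p.2)) ∈ Ω})
    (hvrel : ∀ p : ℝ × ℝ, 0 < 1 + ε * p.2 →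
      (p.1 / (1 + ε * p.2), p.2 / (1 + ε * p.2)) ∈ Ω →
      F (v p) = (1 + ε * p.2) ^ (-(1 / 2) : ℝ) *
        Real.exp (-α * ε * p.1 ^ 2 / (4 * (1 + ε * p.2))) *
        F (u (p.1 / (1 + ε * p.2), p.2 / (1 + ε * p.2)))) :
    ∀ p : ℝ × ℝ, 0 < 1 + ε * p.2 →
      (p.1 / (1 + ε * p.2), p.2 / (1 + ε * p.2)) ∈ Ω →
      heatEqAt (fun y => α * K y) K v p := by
  rintro ⟨x, t⟩ hs hq
  have hp : ∀ᶠ p in 𝓝 (x, t), 0 < 1 + ε * p.2 ∧ (p.1 / (1 + ε * p.2), p.2 / (1 + ε * p.2)) ∈ Ω :=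
    (isOpen_appellDomain hΩ).eventually_mem ⟨hs, hq⟩
  have hF₂ : ContDiff ℝ 2 F := contDiff_succ_of_hasDerivAt (n := 1) hF hK
  have hu₁ : ∀ᶠ q in 𝓝 (x / (1 + ε * t), t / (1 + ε * t)), DifferentiableAt ℝ u q :=
    (hΩ.eventually_mem hq).mono fun q hq =>
      (hu.contDiffAt (hΩ.mem_nhds hq)).differentiableAt (by norm_num)
  have hv₁ : ∀ᶠ q in 𝓝 (x, t), DifferentiableAt ℝ v q := hp.mono fun q hq =>
    (hv.contDiffAt ((isOpen_appellDomain hΩ).mem_nhds hq)).differentiableAt (by norm_num)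
  have hrel : (fun q => F (v q)) =ᶠ[𝓝 (x, t)] appellTransform α ε fun q => F (u q) :=
    hp.mono fun q hq => hvrel q hq.1 hq.2
  rw [heatEqAt_iff_comp hF hv₁, heatEqAt_congr hrel]
  exact heatEqAt_appellTransform hs.ne'
    (hF₂.contDiffAt.comp _ (hu.contDiffAt (hΩ.mem_nhds hq)))
    ((heatEqAt_iff_comp hF hu₁).1 (hpde _ hq))
end

section
/- Let ρ, c₀, k₀ be positive real constants, β ≥ 0, p > 0, and a, b real constants, and set α := ρc₀/k₀. Let Ω ⊆ ℝ × (0,∞) be open and u : ℝ × ℝ → ℝ twice continuously differentiable on Ω with u(x,t) > 0 and satisfying the implicit relation u(x,t) + β·u(x,t)^{p+1}/(p+1) = t^{-1/2}·( a·x/t + b )·exp( -α x²/(4t) ) for all (x,t) ∈ Ω. Then u satisfies ρc₀(1+βu^p)·∂_t u = ∂_x( k₀(1+βu^p)·∂_x u ) at every point of Ω. (Invariant solution associated with the generator X̄₁ for power-type coefficients.) -/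
/-!
The substitution `w = u + β u^{p+1}/(p+1)` (Kirchhoff transform, `w' = 1 + β u^p`) turns
`C(u) u_t = (K(u) u_x)_x` with `C = αK` into the linear heat equation `α w_t = w_xx`:
indeed `C(u) u_t = α k₀ w_t` and `K(u) u_x = k₀ w_x`. The right-hand side of the implicit
relation is a linear combination of the heat kernel `t^{-1/2} exp(-αx²/(4t))` and its
`x`-derivative, hence a solution of `α w_t = w_xx`.
-/

open Filter Topology

section HeatSource

variable (α a b : ℝ)

noncomputable def heatSource (x t : ℝ) : ℝ :=
  t ^ (-(1 / 2) : ℝ) * (a * x / t + b) * Real.exp (-α * x ^ 2 / (4 * t))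

noncomputable def heatSourceX (x t : ℝ) : ℝ :=
  t ^ (-(1 / 2) : ℝ) * (a / t - α * x * (a * x / t + b) / (2 * t)) *
    Real.exp (-α * x ^ 2 / (4 * t))

noncomputable def heatSourceT (x t : ℝ) : ℝ :=
  t ^ (-(1 / 2) : ℝ) *
    (α * x ^ 2 * (a * x / t + b) / (4 * t ^ 2) - (a * x / t + b) / (2 * t) - a * x / t ^ 2) *
    Real.exp (-α * x ^ 2 / (4 * t))

variable {α a b}

lemma hasDerivAt_gaussian_x (t x : ℝ) :
    HasDerivAt (fun y => Real.exp (-α * y ^ 2 / (4 * t)))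
      (-(α * x / (2 * t)) * Real.exp (-α * x ^ 2 / (4 * t))) x := by
  refine (((hasDerivAt_pow 2 x).const_mul (-α)).div_const (4 * t)).exp.congr_deriv ?_
  by_cases ht : t = 0
  · simp [ht]
  · field_simp; ring

lemma hasDerivAt_heatSource_x (t x : ℝ) :
    HasDerivAt (fun y => heatSource α a b y t) (heatSourceX α a b x t) x := by
  refine (((((hasDerivAt_id' x).const_mul a).div_const t).add_const b).const_mul
    (t ^ (-(1 / 2) : ℝ)) |>.mul (hasDerivAt_gaussian_x t x)).congr_deriv ?_
  unfold heatSourceX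
  by_cases ht : t = 0
  · simp [ht]
  · field_simp; ring

lemma hasDerivAt_heatSourceX_x {t : ℝ} (ht : t ≠ 0) (x : ℝ) :
    HasDerivAt (fun y => heatSourceX α a b y t) (α * heatSourceT α a b x t) x := by
  have hl : HasDerivAt (fun y => a / t - α * y * (a * y / t + b) / (2 * t))
      (-(α * (2 * a * x / t + b) / (2 * t))) x := by
    refine (((((hasDerivAt_id' x).const_mul α).mul
      (((hasDerivAt_id' x).const_mul a).div_const t |>.add_const b)).div_const (2 * t)).const_sub
      (a / t)).congr_deriv ?_
    field_simp; ring
  refine ((hl.const_mul (t ^ (-(1 / 2) : ℝ))).mul (hasDerivAt_gaussian_x t x)).congr_deriv ?_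
  unfold heatSourceT
  field_simp; ring

lemma hasDerivAt_heatSource_t {t : ℝ} (ht : t ≠ 0) (x : ℝ) :
    HasDerivAt (fun s => heatSource α a b x s) (heatSourceT α a b x t) t := by
  have hs : HasDerivAt (fun s : ℝ => s ^ (-(1 / 2) : ℝ))
      (-(1 / 2) * (t ^ (-(1 / 2) : ℝ) / t)) t := by
    simpa [Real.rpow_sub_one ht] using Real.hasDerivAt_rpow_const (p := -(1 / 2)) (Or.inl ht)
  have hl := ((hasDerivAt_const t (a * x)).div (hasDerivAt_id' t) ht).add_const b
  have he := ((hasDerivAt_const t (-α * x ^ 2)).div ((hasDerivAt_id' t).const_mul 4)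
    (by simpa using ht)).exp
  refine ((hs.mul hl).mul he).congr_deriv ?_
  simp only [heatSourceT, Pi.div_apply, Pi.mul_apply]
  field_simp; ring

end HeatSource

lemma mul_deriv_eq_of_comp_eventuallyEq {Φ g f : ℝ → ℝ} {φ f' x : ℝ}
    (hΦ : HasDerivAt Φ φ (g x)) (hg : DifferentiableAt ℝ g x) (hf : HasDerivAt f f' x)
    (hfg : Φ ∘ g =ᶠ[𝓝 x] f) : φ * deriv g x = f' :=
  (hΦ.comp x hg.hasDerivAt).unique (hf.congr_of_eventuallyEq hfg)

lemma hasDerivAt_add_mul_rpow_succ_div (β : ℝ) {p v : ℝ} (hp : p + 1 ≠ 0) (hv : v ≠ 0) :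
    HasDerivAt (fun y => y + β * y ^ (p + 1) / (p + 1)) (1 + β * v ^ p) v := by
  have hpow := Real.hasDerivAt_rpow_const (p := p + 1) (Or.inl hv)
  refine ((hasDerivAt_id' v).add ((hpow.const_mul β).div_const (p + 1))).congr_deriv ?_
  rw [add_sub_cancel_right]
  field_simp

theorem heatEqAt_of_kirchhoff {Φ φ : ℝ → ℝ} {F Fx Ft : ℝ → ℝ → ℝ} {α k : ℝ}
    {Ω : Set (ℝ × ℝ)} (hΩ : IsOpen Ω) {u : ℝ × ℝ → ℝ} (hu : DifferentiableOn ℝ u Ω)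
    (hΦ : ∀ q ∈ Ω, HasDerivAt Φ (φ (u q)) (u q))
    (hrel : ∀ q ∈ Ω, Φ (u q) = F q.1 q.2)
    (hFx : ∀ q ∈ Ω, HasDerivAt (fun y => F y q.2) (Fx q.1 q.2) q.1)
    (hFt : ∀ q ∈ Ω, HasDerivAt (fun s => F q.1 s) (Ft q.1 q.2) q.2)
    (hFxx : ∀ q ∈ Ω, HasDerivAt (fun y => Fx y q.2) (α * Ft q.1 q.2) q.1) :
    ∀ q ∈ Ω, heatEqAt (fun v => α * k * φ v) (fun v => k * φ v) u q := by
  rintro ⟨x, t⟩ hq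
  have hdiff : ∀ q ∈ Ω, DifferentiableAt ℝ u q := fun q hq =>
    hu.differentiableAt (hΩ.mem_nhds hq)
  have hΩx : IsOpen {y : ℝ | (y, t) ∈ Ω} := hΩ.preimage (by fun_prop)
  have hΩt : IsOpen {s : ℝ | (x, s) ∈ Ω} := hΩ.preimage (by fun_prop)
  have hux : ∀ y, (y, t) ∈ Ω → φ (u (y, t)) * deriv (fun z => u (z, t)) y = Fx y t :=
    fun y hy => mul_deriv_eq_of_comp_eventuallyEq (hΦ _ hy)
      ((hdiff _ hy).comp y (by fun_prop)) (hFx _ hy)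
      (eventually_of_mem (hΩx.mem_nhds hy) fun z hz => hrel (z, t) hz)
  have hut : φ (u (x, t)) * deriv (fun s => u (x, s)) t = Ft x t :=
    mul_deriv_eq_of_comp_eventuallyEq (hΦ _ hq) ((hdiff _ hq).comp t (by fun_prop)) (hFt _ hq)
      (eventually_of_mem (hΩt.mem_nhds hq) fun s hs => hrel (x, s) hs)
  have hflux : (fun y => k * φ (u (y, t)) * deriv (fun z => u (z, t)) y)
      =ᶠ[𝓝 x] fun y => k * Fx y t :=
    eventually_of_mem (hΩx.mem_nhds hq) fun y hy => by simp only [mul_assoc, hux y hy]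
  show α * k * φ (u (x, t)) * deriv (fun s => u (x, s)) t =
    deriv (fun y => k * φ (u (y, t)) * deriv (fun z => u (z, t)) y) x
  rw [hflux.deriv_eq, ((hFxx _ hq).const_mul k).deriv, mul_assoc, hut]
  ring

theorem stmt17_general (ρ c₀ k₀ β p a b : ℝ)
    (hk : 0 < k₀) (hp : 0 < p)
    (α : ℝ) (hα : α = ρ * c₀ / k₀)
    (Ω : Set (ℝ × ℝ)) (hΩ : IsOpen Ω) (hΩsub : Ω ⊆ {q : ℝ × ℝ | 0 < q.2})
    (u : ℝ × ℝ → ℝ) (hu : ContDiffOn ℝ 2 u Ω)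
    (hupos : ∀ q ∈ Ω, 0 < u q)
    (hrel : ∀ q ∈ Ω, u q + β * u q ^ (p + 1) / (p + 1) =
      q.2 ^ (-(1 / 2) : ℝ) * (a * q.1 / q.2 + b) *
        Real.exp (-α * q.1 ^ 2 / (4 * q.2))) :
    ∀ q ∈ Ω,
      heatEqAt (fun y => ρ * c₀ * (1 + β * y ^ p)) (fun y => k₀ * (1 + β * y ^ p)) u q := by
  have hρc : ρ * c₀ = α * k₀ := by
    rw [hα]
    field_simp
  rw [hρc]
  exact heatEqAt_of_kirchhoff (Φ := fun y => y + β * y ^ (p + 1) / (p + 1))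
    (φ := fun y => 1 + β * y ^ p) (F := heatSource α a b) hΩ (hu.differentiableOn (by norm_num))
    (fun q hq => hasDerivAt_add_mul_rpow_succ_div β (by linarith) (hupos q hq).ne') hrel
    (fun q _ => hasDerivAt_heatSource_x q.2 q.1)
    (fun q hq => hasDerivAt_heatSource_t (hΩsub hq).ne' q.1)
    (fun q hq => hasDerivAt_heatSourceX_x (hΩsub hq).ne' q.1)

/-- Invariant solution associated with the generator `X̄₁` for power-type coefficients:
if `u + β·u^{p+1}/(p+1) = t^{-1/2}(a·x/t + b)·exp(-αx²/(4t))` with `α = ρc₀/k₀`, then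
`u` solves `ρc₀(1+βu^p)u_t = (k₀(1+βu^p)u_x)_x` on `Ω`. -/
theorem stmt17 (ρ c₀ k₀ β p a b : ℝ)
    (hρ : 0 < ρ) (hc : 0 < c₀) (hk : 0 < k₀) (hβ : 0 ≤ β) (hp : 0 < p)
    (α : ℝ) (hα : α = ρ * c₀ / k₀)
    (Ω : Set (ℝ × ℝ)) (hΩ : IsOpen Ω) (hΩsub : Ω ⊆ {q : ℝ × ℝ | 0 < q.2})
    (u : ℝ × ℝ → ℝ) (hu : ContDiffOn ℝ 2 u Ω)
    (hupos : ∀ q ∈ Ω, 0 < u q)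
    (hrel : ∀ q ∈ Ω, u q + β * u q ^ (p + 1) / (p + 1) =
      q.2 ^ (-(1 / 2) : ℝ) * (a * q.1 / q.2 + b) *
        Real.exp (-α * q.1 ^ 2 / (4 * q.2))) :
    ∀ q ∈ Ω,
      heatEqAt (fun y => ρ * c₀ * (1 + β * y ^ p)) (fun y => k₀ * (1 + β * y ^ p)) u q :=
  stmt17_general ρ c₀ k₀ β p a b hk hp α hα Ω hΩ hΩsub u hu hupos hrel
end
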